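/- arXiv:2401.02647 — 5 statements merged into one kernel-verified Lean document; each statement's English description precedes it below -/
import Mathlib

section
/- Let m ≥ 1 and let H i > 0, F i > 0, A i > 0 for i = 1,…,m, with F increasing (F i ≤ F_{i+1}) and A decreasing (A i ≥ A_{i+1}). Then (∑ i, H i * F i) / (∑ i, H i) ≥ (∑ i, A i * H i * F i) / (∑ i, A i * H i). -/
/-- Chebyshev-type weighted average inequality: for positive weights H,
an increasing positive sequence F and a decreasing positive sequence A,
the A-reweighted average of F is at most the plain H-weighted average. -/
theorem stmt_1 (m : ℕ) (hm : 1 ≤ m) (H F A : ℕ → ℝ)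
    (hH : ∀ i, 1 ≤ i → i ≤ m → 0 < H i)
    (hF : ∀ i, 1 ≤ i → i ≤ m → 0 < F i)
    (hA : ∀ i, 1 ≤ i → i ≤ m → 0 < A i)
    (hFmono : ∀ i, 1 ≤ i → i + 1 ≤ m → F i ≤ F (i + 1))
    (hAmono : ∀ i, 1 ≤ i → i + 1 ≤ m → A (i + 1) ≤ A i) :
    (∑ i ∈ Finset.Icc 1 m, H i * F i) / (∑ i ∈ Finset.Icc 1 m, H i) ≥
      (∑ i ∈ Finset.Icc 1 m, A i * H i * F i) / (∑ i ∈ Finset.Icc 1 m, A i * H i) := by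
  set s := Finset.Icc 1 m with hs
  have hmem : ∀ i ∈ s, 1 ≤ i ∧ i ≤ m := by
    intro i hi; exact Finset.mem_Icc.mp hi
  have hne : s.Nonempty := Finset.nonempty_Icc.mpr hm
  have hHpos : ∀ i ∈ s, 0 < H i := fun i hi => hH i (hmem i hi).1 (hmem i hi).2
  have hsumH : 0 < ∑ i ∈ s, H i := Finset.sum_pos hHpos hne
  have hsumAH : 0 < ∑ i ∈ s, A i * H i :=
    Finset.sum_pos (fun i hi => mul_pos (hA i (hmem i hi).1 (hmem i hi).2) (hHpos i hi)) hne
  have hFle : ∀ i j, 1 ≤ i → j ≤ m → i ≤ j → F i ≤ F j := by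
    intro i j hi hjm hij
    induction j with
    | zero => omega
    | succ n ih =>
      rcases Nat.lt_or_ge i (n+1) with h | h
      · have hn : i ≤ n := by omega
        have h1 : F i ≤ F n := ih (by omega) hn
        have h2 : F n ≤ F (n+1) := hFmono n (by omega) hjm
        linarith
      · have : i = n + 1 := by omega
        simp [this]
  have hAle : ∀ i j, 1 ≤ i → j ≤ m → i ≤ j → A j ≤ A i := by
    intro i j hi hjm hij
    induction j with
    | zero => omega
    | succ n ih =>
      rcases Nat.lt_or_ge i (n+1) with h | h
      · have hn : i ≤ n := by omega
        have h1 : A n ≤ A i := ih (by omega) hn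
        have h2 : A (n+1) ≤ A n := hAmono n (by omega) hjm
        linarith
      · have : i = n + 1 := by omega
        simp [this]
  have hT : ∀ i ∈ s, ∀ j ∈ s, 0 ≤ H i * H j * ((A j - A i) * (F i - F j)) := by
    intro i hi j hj
    obtain ⟨hi1, him⟩ := hmem i hi
    obtain ⟨hj1, hjm⟩ := hmem j hj
    have hprod : 0 ≤ (A j - A i) * (F i - F j) := by
      rcases le_total i j with h | h
      · have h1 := hFle i j hi1 hjm h
        have h2 := hAle i j hi1 hjm h
        nlinarith
      · have h1 := hFle j i hj1 him h
        have h2 := hAle j i hj1 him h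
        nlinarith
    exact mul_nonneg (mul_nonneg (hHpos i hi).le (hHpos j hj).le) hprod
  have key : 0 ≤ ∑ i ∈ s, ∑ j ∈ s, H i * H j * ((A j - A i) * (F i - F j)) :=
    Finset.sum_nonneg fun i hi => Finset.sum_nonneg fun j hj => hT i hi j hj
  have swap : ∑ i ∈ s, ∑ j ∈ s, H i * H j * (A i * (F j - F i))
      = ∑ i ∈ s, ∑ j ∈ s, H i * H j * (A j * (F i - F j)) := by
    rw [Finset.sum_comm]
    exact Finset.sum_congr rfl fun i _ => Finset.sum_congr rfl fun j _ => by ring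
  have hsplit : ∑ i ∈ s, ∑ j ∈ s, H i * H j * ((A j - A i) * (F i - F j))
      = 2 * ∑ i ∈ s, ∑ j ∈ s, H i * H j * (A j * (F i - F j)) := by
    have : ∀ i ∈ s, ∀ j ∈ s, H i * H j * ((A j - A i) * (F i - F j))
        = H i * H j * (A j * (F i - F j)) + H i * H j * (A i * (F j - F i)) := by
      intros; ring
    calc ∑ i ∈ s, ∑ j ∈ s, H i * H j * ((A j - A i) * (F i - F j))
        = ∑ i ∈ s, ∑ j ∈ s, (H i * H j * (A j * (F i - F j)) + H i * H j * (A i * (F j - F i))) :=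
          Finset.sum_congr rfl fun i hi => Finset.sum_congr rfl fun j hj => this i hi j hj
      _ = (∑ i ∈ s, ∑ j ∈ s, H i * H j * (A j * (F i - F j)))
          + ∑ i ∈ s, ∑ j ∈ s, H i * H j * (A i * (F j - F i)) := by
          rw [← Finset.sum_add_distrib]
          exact Finset.sum_congr rfl fun i _ => Finset.sum_add_distrib
      _ = 2 * ∑ i ∈ s, ∑ j ∈ s, H i * H j * (A j * (F i - F j)) := by rw [swap]; ring
  have hD : ∑ i ∈ s, ∑ j ∈ s, H i * H j * (A j * (F i - F j))
      = (∑ i ∈ s, H i * F i) * (∑ i ∈ s, A i * H i)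
        - (∑ i ∈ s, H i) * (∑ i ∈ s, A i * H i * F i) := by
    rw [Finset.sum_mul_sum, Finset.sum_mul_sum, ← Finset.sum_sub_distrib]
    refine Finset.sum_congr rfl fun i _ => ?_
    rw [← Finset.sum_sub_distrib]
    exact Finset.sum_congr rfl fun j _ => by ring
  rw [hsplit, hD] at key
  rw [ge_iff_le, div_le_div_iff₀ hsumAH hsumH]
  nlinarith [key]
end

section
/- If 0 ≤ f₁ ≤ f₂ ≤ … ≤ f_N < 1, then (∑_{i=1}^N f_i (1-f_i)^{-1}) / (∑_{i=1}^N (1 + f_i (1-f_i)^{-1})) ≥ (∑_{i=1}^N f_i)/N, i.e., the average-case N lower bound f_a is at least the oracle bound f_o. -/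
/-!
Both sides are averages of the `f i`: the left one weighted by `(1 - f i)⁻¹`, the right one
uniformly. Since `x ↦ (1 - x)⁻¹` is increasing on `(-∞, 1)`, the weights increase with `f`,
so by Chebyshev's sum inequality the weighted average is at least the uniform one.
-/

open Finset

lemma one_add_mul_inv_one_sub {x : ℝ} (hx : x ≠ 1) : 1 + x * (1 - x)⁻¹ = (1 - x)⁻¹ := by
  have : 1 - x ≠ 0 := sub_ne_zero.mpr hx.symm
  field_simp
  ring

lemma monotoneOn_inv_one_sub : MonotoneOn (fun x : ℝ => (1 - x)⁻¹) (Set.Iio 1) :=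
  fun _ _ _ hy hxy =>
    inv_anti₀ (sub_pos.mpr (Set.mem_Iio.mp hy)) (sub_le_sub_left hxy 1)

section
variable {ι : Type*} {s : Finset ι} {f w : ι → ℝ}

lemma monovaryOn_inv_one_sub (hf : ∀ i ∈ s, f i < 1) :
    MonovaryOn f (fun i => (1 - f i)⁻¹) s :=
  (monovaryOn_self f s).comp_monotoneOn_right <|
    monotoneOn_inv_one_sub.mono <| by
      rintro _ ⟨i, hi, rfl⟩
      exact hf i hi

lemma MonovaryOn.sum_div_card_le_sum_mul_div_sum (hfw : MonovaryOn f w s)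
    (hw : ∀ i ∈ s, 0 < w i) :
    (∑ i ∈ s, f i) / #s ≤ (∑ i ∈ s, f i * w i) / ∑ i ∈ s, w i := by
  obtain rfl | hs := s.eq_empty_or_nonempty
  · simp
  rw [div_le_div_iff₀ (by exact_mod_cast hs.card_pos) (sum_pos hw hs), mul_comm _ (#s : ℝ)]
  exact hfw.sum_mul_sum_le_card_mul_sum

end

theorem stmt_4_general (N : ℕ) (f : ℕ → ℝ)
    (h1 : ∀ i, 1 ≤ i → i ≤ N → f i < 1) :
    (∑ i ∈ Finset.Icc 1 N, f i * (1 - f i)⁻¹) /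
        (∑ i ∈ Finset.Icc 1 N, (1 + f i * (1 - f i)⁻¹)) ≥
      (∑ i ∈ Finset.Icc 1 N, f i) / N := by
  have hf : ∀ i ∈ Icc 1 N, f i < 1 := fun i hi =>
    h1 i (mem_Icc.mp hi).1 (mem_Icc.mp hi).2
  have hden : ∑ i ∈ Icc 1 N, (1 + f i * (1 - f i)⁻¹) = ∑ i ∈ Icc 1 N, (1 - f i)⁻¹ :=
    sum_congr rfl fun i hi => one_add_mul_inv_one_sub (hf i hi).ne
  have hcard : (#(Icc 1 N) : ℝ) = N := by simp
  rw [hden, ge_iff_le, ← hcard]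
  exact (monovaryOn_inv_one_sub hf).sum_div_card_le_sum_mul_div_sum
    fun i hi => inv_pos.mpr (sub_pos.mpr (hf i hi))

/-- If 0 ≤ f₁ ≤ ⋯ ≤ f_N < 1 then the average-case N lower bound
f_a = (∑ f_i/(1-f_i)) / (∑ (1 + f_i/(1-f_i))) is at least the oracle
bound f_o = (∑ f_i)/N. -/
theorem stmt_4 (N : ℕ) (hN : 1 ≤ N) (f : ℕ → ℝ)
    (h0 : ∀ i, 1 ≤ i → i ≤ N → 0 ≤ f i)
    (h1 : ∀ i, 1 ≤ i → i ≤ N → f i < 1)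
    (hmono : ∀ i, 1 ≤ i → i + 1 ≤ N → f i ≤ f (i + 1)) :
    (∑ i ∈ Finset.Icc 1 N, f i * (1 - f i)⁻¹) /
        (∑ i ∈ Finset.Icc 1 N, (1 + f i * (1 - f i)⁻¹)) ≥
      (∑ i ∈ Finset.Icc 1 N, f i) / N :=
  stmt_4_general N f h1
end

section
/- For all integers M ≥ 1 and 0 ≤ i ≤ M and k ≥ 0 with k ≤ M, the non-colliding false positive probability C(i,k)/C(M,k) is at most the colliding false positive probability (i/M)^k. -/
lemma descFact_aux (i M : ℕ) (hi : i ≤ M) :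
    ∀ k, i.descFactorial k * M ^ k ≤ M.descFactorial k * i ^ k := by
  intro k
  induction k with
  | zero => simp
  | succ k ih =>
    rw [Nat.descFactorial_succ, Nat.descFactorial_succ, pow_succ, pow_succ]
    have h1 : (i - k) * M ≤ (M - k) * i := by
      rcases le_or_gt k i with h | h
      · have hkM : k ≤ M := h.trans hi
        have : k * i ≤ k * M := Nat.mul_le_mul_left k hi
        zify [h, hkM]
        nlinarith
      · simp [Nat.sub_eq_zero_of_le h.le]
    calc (i - k) * i.descFactorial k * (M ^ k * M)
        = ((i - k) * M) * (i.descFactorial k * M ^ k) := by ring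
      _ ≤ ((M - k) * i) * (M.descFactorial k * i ^ k) := Nat.mul_le_mul h1 ih
      _ = (M - k) * M.descFactorial k * (i ^ k * i) := by ring

lemma choose_aux (i M k : ℕ) (hi : i ≤ M) :
    i.choose k * M ^ k ≤ M.choose k * i ^ k := by
  have h := descFact_aux i M hi k
  rw [Nat.descFactorial_eq_factorial_mul_choose, Nat.descFactorial_eq_factorial_mul_choose] at h
  have hf : 0 < k.factorial := Nat.factorial_pos k
  have : k.factorial * (i.choose k * M ^ k) ≤ k.factorial * (M.choose k * i ^ k) := by
    calc k.factorial * (i.choose k * M ^ k) = k.factorial * i.choose k * M ^ k := by ring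
      _ ≤ k.factorial * M.choose k * i ^ k := h
      _ = k.factorial * (M.choose k * i ^ k) := by ring
  exact Nat.le_of_mul_le_mul_left this hf

/-- The non-colliding false positive probability C(i,k)/C(M,k) is at most the
colliding one (i/M)^k. -/
theorem stmt_7 (M i k : ℕ) (hM : 1 ≤ M) (hi : i ≤ M) (hk : k ≤ M) :
    (Nat.choose i k : ℝ) / (Nat.choose M k : ℝ) ≤ ((i : ℝ) / (M : ℝ)) ^ k := by
  have hCM : (0:ℝ) < (M.choose k : ℝ) := by
    exact_mod_cast Nat.choose_pos hk
  have hMk : (0:ℝ) < (M:ℝ) ^ k := by positivity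
  rw [div_pow, div_le_div_iff₀ hCM hMk]
  rw [mul_comm ((i:ℝ)^k)]
  exact_mod_cast choose_aux i M k hi
end

section
/- For the non-colliding recursion τ_0(i,j)=[i=j] and τ_k(i,j) = τ_{k-1}(i,j)·(j-(k-1))/(M-(k-1)) + τ_{k-1}(i,j-1)·(M-j+1)/(M-(k-1)), the diagonal entry satisfies τ_k(i,i) = binomial(i,k)/binomial(M,k) for all k ≤ i ≤ M. -/
/-- Transition probabilities of the non-colliding Bloom filter:
τ_0(i,j) = [i = j],
τ_k(i,j) = τ_{k-1}(i,j)·((j-(k-1))/(M-(k-1))) + τ_{k-1}(i,j-1)·((M-j+1)/(M-(k-1))). -/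
noncomputable def tauNC (M : ℕ) : ℕ → ℕ → ℕ → ℝ
  | 0, i, j => if i = j then 1 else 0
  | k + 1, i, j =>
      tauNC M k i j * (((j : ℝ) - (k : ℝ)) / ((M : ℝ) - (k : ℝ))) +
        (if j = 0 then 0 else
          tauNC M k i (j - 1) * (((M : ℝ) - (j : ℝ) + 1) / ((M : ℝ) - (k : ℝ))))

lemma tauNC_below (M : ℕ) : ∀ k i j : ℕ, j < i → tauNC M k i j = 0 := by
  intro k
  induction k with
  | zero => intro i j h; simp [tauNC, Nat.ne_of_gt h]
  | succ k ih =>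
    intro i j h
    rw [tauNC, ih i j h]
    rcases Nat.eq_zero_or_pos j with hj | hj
    · simp [hj]
    · rw [if_neg (Nat.pos_iff_ne_zero.mp hj), ih i (j - 1) (lt_trans (Nat.sub_lt hj one_pos) h)]
      ring

/-- The non-colliding diagonal entry equals the hypergeometric value:
τ_k(i,i) = C(i,k)/C(M,k) for k ≤ i ≤ M. -/
theorem stmt_11 (M i k : ℕ) (hM : 1 ≤ M) (hk : k ≤ i) (hi : i ≤ M) :
    tauNC M k i i = (Nat.choose i k : ℝ) / (Nat.choose M k : ℝ) := by
  induction k with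
  | zero => simp [tauNC]
  | succ k ih =>
    have hki : k ≤ i := Nat.le_of_succ_le hk
    have hiz : i ≠ 0 := Nat.pos_iff_ne_zero.mp (Nat.lt_of_lt_of_le (Nat.succ_pos k) hk)
    rw [tauNC, if_neg hiz, tauNC_below M k i (i - 1) (Nat.sub_lt (Nat.pos_of_ne_zero hiz) one_pos),
      ih hki]
    have hkM : k < M := Nat.lt_of_lt_of_le hk hi
    have hMk : ((M : ℝ) - (k : ℝ)) ≠ 0 := by
      have : (k : ℝ) < (M : ℝ) := by exact_mod_cast hkM
      linarith
    have hcM : (Nat.choose M k : ℝ) ≠ 0 :=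
      Nat.cast_ne_zero.mpr (Nat.choose_pos hkM.le).ne'
    have hcM1 : (Nat.choose M (k + 1) : ℝ) ≠ 0 :=
      Nat.cast_ne_zero.mpr (Nat.choose_pos hkM).ne'
    have hidi : (Nat.choose i (k + 1) : ℝ) * (k + 1) = (Nat.choose i k : ℝ) * ((i : ℝ) - k) := by
      have := Nat.choose_succ_right_eq i k
      have h2 : ((Nat.choose i (k + 1) * (k + 1) : ℕ) : ℝ) = ((Nat.choose i k * (i - k) : ℕ) : ℝ) := by
        exact_mod_cast congrArg (Nat.cast : ℕ → ℝ) this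
      push_cast [Nat.cast_sub hki] at h2
      linarith
    have hMdi : (Nat.choose M (k + 1) : ℝ) * (k + 1) = (Nat.choose M k : ℝ) * ((M : ℝ) - k) := by
      have := Nat.choose_succ_right_eq M k
      have h2 : ((Nat.choose M (k + 1) * (k + 1) : ℕ) : ℝ) = ((Nat.choose M k * (M - k) : ℕ) : ℝ) := by
        exact_mod_cast congrArg (Nat.cast : ℕ → ℝ) this
      push_cast [Nat.cast_sub hkM.le] at h2
      linarith
    have hk1 : ((k : ℝ) + 1) ≠ 0 := by positivity
    field_simp
    nlinarith [hidi, hMdi, mul_pos (show (0:ℝ) < Nat.choose i k from Nat.cast_pos.mpr (Nat.choose_pos hki)) (show (0:ℝ) < Nat.choose M k from Nat.cast_pos.mpr (Nat.choose_pos hkM.le))]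
end

section
/- For k = 1 colliding non-retaining RBF with memory M and threshold σ < M, the stationary probabilities are π_i = (1/(M-i)) / (∑_{j=0}^{σ} 1/(M-j)) and hence the long-term average false positive rate equals ∑_{i=0}^{σ} i / (M (M-i) ∑_{j=0}^{σ} 1/(M-j)). -/
/-!
The chain only ever moves along the cycle `0 → 1 → ⋯ → σ → 0`, leaving state `i` with
probability `q i = (M - i) / M`. On such a cycle a measure is stationary as soon as the
probability flux `π i * q i` is the same at every state, since then each state receives from its
predecessor exactly what it loses; hence `π i ∝ 1 / q i ∝ 1 / (M - i)`.
-/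

open Finset

def cycleSucc (σ i : ℕ) : ℕ := if i < σ then i + 1 else 0

def cyclePred (σ i : ℕ) : ℕ := if i = 0 then σ else i - 1

lemma cycleSucc_eq_iff {σ i j : ℕ} (hi : i ≤ σ) (hj : j ≤ σ) :
    cycleSucc σ j = i ↔ j = cyclePred σ i := by
  unfold cycleSucc cyclePred
  split_ifs <;> omega

lemma cyclePred_le {σ i : ℕ} (hi : i ≤ σ) : cyclePred σ i ≤ σ := by
  unfold cyclePred
  split_ifs <;> omega

def cycleKernel (σ : ℕ) (q : ℕ → ℝ) (i j : ℕ) : ℝ :=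
  (if j = i then 1 - q i else 0) + (if j = cycleSucc σ i then q i else 0)

theorem sum_mul_cycleKernel_of_flux_eq {σ : ℕ} {q π : ℕ → ℝ} {c : ℝ}
    (hflux : ∀ i ≤ σ, π i * q i = c) {i : ℕ} (hi : i ≤ σ) :
    ∑ j ∈ range (σ + 1), π j * cycleKernel σ q j i = π i := by
  have hstay : ∑ j ∈ range (σ + 1), (if i = j then π j * (1 - q j) else 0)
      = π i * (1 - q i) := by
    rw [sum_ite_eq, if_pos (mem_range_succ_iff.mpr hi)]
  have hinflow : ∑ j ∈ range (σ + 1), (if i = cycleSucc σ j then π j * q j else 0) = c := by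
    have hpred := cyclePred_le hi
    calc ∑ j ∈ range (σ + 1), (if i = cycleSucc σ j then π j * q j else 0)
        = ∑ j ∈ range (σ + 1), (if cyclePred σ i = j then π j * q j else 0) :=
          sum_congr rfl fun j hj => if_congr (eq_comm.trans
            ((cycleSucc_eq_iff hi (mem_range_succ_iff.mp hj)).trans eq_comm)) rfl rfl
      _ = c := by rw [sum_ite_eq, if_pos (mem_range_succ_iff.mpr hpred), hflux _ hpred]
  simp only [cycleKernel, mul_add, mul_ite, mul_zero, sum_add_distrib, hstay, hinflow,
    ← hflux i hi]
  ring

/-- The state of the filter is its number of set cells. -/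
noncomputable def rbfKernel (M σ : ℕ) (i j : ℕ) : ℝ :=
  if i < σ then
    (if j = i then (i : ℝ) / (M : ℝ)
     else if j = i + 1 then ((M : ℝ) - (i : ℝ)) / (M : ℝ) else 0)
  else
    (if j = 0 then ((M : ℝ) - (σ : ℝ)) / (M : ℝ)
     else if j = σ then (σ : ℝ) / (M : ℝ) else 0)

theorem rbfKernel_eq_cycleKernel {M σ i : ℕ} (hσ : σ < M) (hi : i ≤ σ) (j : ℕ) :
    rbfKernel M σ i j = cycleKernel σ (fun i => ((M : ℝ) - i) / M) i j := by
  have hM : (M : ℝ) ≠ 0 := Nat.cast_ne_zero.mpr (by omega)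
  have hstay (i : ℕ) : 1 - ((M : ℝ) - i) / M = i / M := by field_simp; ring
  unfold rbfKernel cycleKernel cycleSucc
  rcases hi.lt_or_eq with hi | rfl <;> split_ifs <;> subst_vars <;> first | omega | simp [hstay, hM]

/-- Closed form for the k = 1 colliding non-retaining RBF:
π_i = (1/(M-i)) / (∑_{j=0}^σ 1/(M-j)) is stationary for the chain, and the
long-term average false positive rate ∑ π_i·(i/M) equals
∑_{i=0}^σ i / (M (M-i) ∑_{j=0}^σ 1/(M-j)). -/
theorem stmt_13 (M σ : ℕ) (hσ : σ < M) :
    let S : ℝ := ∑ j ∈ Finset.range (σ + 1), 1 / ((M : ℝ) - (j : ℝ))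
    let π : ℕ → ℝ := fun i => (1 / ((M : ℝ) - (i : ℝ))) / S
    let P : ℕ → ℕ → ℝ := fun i j =>
      if i < σ then
        (if j = i then (i : ℝ) / (M : ℝ)
         else if j = i + 1 then ((M : ℝ) - (i : ℝ)) / (M : ℝ) else 0)
      else
        (if j = 0 then ((M : ℝ) - (σ : ℝ)) / (M : ℝ)
         else if j = σ then (σ : ℝ) / (M : ℝ) else 0)
    (∀ i ≤ σ, π i = ∑ j ∈ Finset.range (σ + 1), π j * P j i) ∧
      ∑ i ∈ Finset.range (σ + 1), π i * ((i : ℝ) / (M : ℝ)) =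
        ∑ i ∈ Finset.range (σ + 1), (i : ℝ) / ((M : ℝ) * ((M : ℝ) - (i : ℝ)) * S) := by
  intro S π P
  have hflux : ∀ i ≤ σ, π i * (((M : ℝ) - i) / M) = 1 / (M * S) := fun i hi => by
    have : (M : ℝ) - i ≠ 0 := sub_ne_zero.mpr (by norm_cast; omega)
    simp only [π]
    field_simp
  refine ⟨fun i hi => ?_, sum_congr rfl fun i _ => ?_⟩
  · rw [← sum_mul_cycleKernel_of_flux_eq hflux hi]
    exact sum_congr rfl fun j hj =>
      congrArg _ (rbfKernel_eq_cycleKernel hσ (mem_range_succ_iff.mp hj) i).symm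
  · simp only [π, div_eq_mul_inv, mul_inv, one_mul]
    ring
end
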